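/- Let λ, μ be multipartitions of n and s a standard λ-tableau. Suppose there exist integers a < b lying in the same row of t^μ and in the same column of s. Then there exist w in the symmetric group on {a, a+1, ..., b} and an integer a ≤ c < b such that: (i) sw is standard; (ii) ℓ(d(s)w) = ℓ(d(s)) + ℓ(w); (iii) c and c+1 lie in the same row of t^μ and in the same column of sw. -/

import Mathlib

open scoped Classical

noncomputable section

namespace SpechtInduction

/-- A node `(l, r, c)`: component `l`, row `r`, column `c` (all 0-indexed). -/
abbrev Node : Type := ℕ × ℕ × ℕ

/-- A multicomposition of `n` with `ℓ` components, each a list of row lengths. -/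
structure Multicomp (ℓ n : ℕ) where
  parts : List (List ℕ)
  len_eq : parts.length = ℓ
  size_eq : (parts.map List.sum).sum = n

namespace Multicomp

variable {ℓ n : ℕ}

def rowLen (μ : Multicomp ℓ n) (l r : ℕ) : ℕ := (μ.parts.getD l []).getD r 0

def mem (μ : Multicomp ℓ n) (x : Node) : Prop := x.2.2 < μ.rowLen x.1 x.2.1

def compSize (μ : Multicomp ℓ n) (l : ℕ) : ℕ := (μ.parts.getD l []).sum

/-- The partial sums appearing in the dominance order. -/
def psum (μ : Multicomp ℓ n) (l i : ℕ) : ℕ :=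
  (∑ k ∈ Finset.range l, μ.compSize k) + ∑ j ∈ Finset.range i, μ.rowLen l j

/-- The dominance order `lam ⊵ mu` on multicompositions. -/
def Dominates (lam mu : Multicomp ℓ n) : Prop := ∀ l i, mu.psum l i ≤ lam.psum l i

/-- Each component is a (weakly decreasing) partition. -/
def IsMultipartition (μ : Multicomp ℓ n) : Prop := ∀ l r, μ.rowLen l (r+1) ≤ μ.rowLen l r

end Multicomp

/-- A `μ`-tableau, recorded by the position function sending each entry `k ∈ {1,…,n}`
to the node it occupies: a bijection onto the diagram of `μ`. -/
def IsTableau {ℓ n : ℕ} (μ : Multicomp ℓ n) (pos : ℕ → Node) : Prop :=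
  (∀ j k, 1 ≤ j → j ≤ n → 1 ≤ k → k ≤ n → pos j = pos k → j = k) ∧
  (∀ k, 1 ≤ k → k ≤ n → μ.mem (pos k)) ∧
  (∀ x, μ.mem x → ∃ k, 1 ≤ k ∧ k ≤ n ∧ pos k = x)

/-- Row standard: entries increase along the rows. -/
def RowStandard {ℓ n : ℕ} (μ : Multicomp ℓ n) (pos : ℕ → Node) : Prop :=
  IsTableau μ pos ∧ ∀ j k, 1 ≤ j → j ≤ n → 1 ≤ k → k ≤ n →
    (pos j).1 = (pos k).1 → (pos j).2.1 = (pos k).2.1 → (pos j).2.2 < (pos k).2.2 → j < k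

/-- Column standard (= conjugate is row standard): entries increase down the columns. -/
def ColStandard {ℓ n : ℕ} (μ : Multicomp ℓ n) (pos : ℕ → Node) : Prop :=
  IsTableau μ pos ∧ ∀ j k, 1 ≤ j → j ≤ n → 1 ≤ k → k ≤ n →
    (pos j).1 = (pos k).1 → (pos j).2.2 = (pos k).2.2 → (pos j).2.1 < (pos k).2.1 → j < k

/-- Standard tableau: the tableau and its conjugate are both row standard. -/
def StandardTab {ℓ n : ℕ} (μ : Multicomp ℓ n) (pos : ℕ → Node) : Prop :=
  RowStandard μ pos ∧ ColStandard μ pos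

/-- Number of entries `≤ m` lying in row `(l,r)`. -/
def cnt (pos : ℕ → Node) (m l r : ℕ) : ℕ :=
  ((Finset.Icc 1 m).filter fun k => (pos k).1 = l ∧ (pos k).2.1 = r).card

/-- Number of entries `≤ m` lying in column `c` of component `l`. -/
def ccnt (pos : ℕ → Node) (m l c : ℕ) : ℕ :=
  ((Finset.Icc 1 m).filter fun k => (pos k).1 = l ∧ (pos k).2.2 = c).card

/-- Number of entries `≤ m` lying in component `l`. -/
def compcnt (pos : ℕ → Node) (m l : ℕ) : ℕ :=
  ((Finset.Icc 1 m).filter fun k => (pos k).1 = l).card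

/-- Dominance partial sums of the shape `Shape(t_m)` of the subtableau on entries `1,…,m`. -/
def tabPsum (pos : ℕ → Node) (m l i : ℕ) : ℕ :=
  (∑ k ∈ Finset.range l, compcnt pos m k) + ∑ j ∈ Finset.range i, cnt pos m l j

/-- Dominance order `s ⊵ t` on tableaux with `n` entries:
`Shape(s_m) ⊵ Shape(t_m)` for all `1 ≤ m ≤ n`. -/
def TabDominates (n : ℕ) (s t : ℕ → Node) : Prop :=
  ∀ m l i, 1 ≤ m → m ≤ n → tabPsum t m l i ≤ tabPsum s m l i

/-- Dominance partial sums of the shape of the *conjugate* of the subtableau `pos_m`,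
for a tableau with `ℓ` components (components get reversed, rows and columns swapped). -/
def conjPsum (ℓ : ℕ) (pos : ℕ → Node) (m l i : ℕ) : ℕ :=
  (∑ k ∈ Finset.range l, compcnt pos m (ℓ - 1 - k)) +
    ∑ j ∈ Finset.range i, ccnt pos m (ℓ - 1 - l) j

/-- `t' ⊵ s'`: the conjugate of `t` dominates the conjugate of `s`. -/
def ConjTabDominates (ℓ n : ℕ) (t s : ℕ → Node) : Prop :=
  ∀ m l i, 1 ≤ m → m ≤ n → conjPsum ℓ s m l i ≤ conjPsum ℓ t m l i

/-- `u' ⊵ t`: the conjugate of `u` dominates `t`. -/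
def ConjDomTab (ℓ n : ℕ) (u t : ℕ → Node) : Prop :=
  ∀ m l i, 1 ≤ m → m ≤ n → tabPsum t m l i ≤ conjPsum ℓ u m l i

/-- Lexicographic (row reading) order on nodes: by component, then row, then column. -/
def nodeLex (x y : Node) : Prop :=
  x.1 < y.1 ∨ (x.1 = y.1 ∧ (x.2.1 < y.2.1 ∨ (x.2.1 = y.2.1 ∧ x.2.2 < y.2.2)))

/-- `pos` is the row-reading tableau `t^μ` of `μ`: entries filled in order along
the rows of each component in turn. -/
def IsRowReading {ℓ n : ℕ} (μ : Multicomp ℓ n) (pos : ℕ → Node) : Prop :=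
  IsTableau μ pos ∧ ∀ j k, 1 ≤ j → j ≤ n → 1 ≤ k → k ≤ n → (j < k ↔ nodeLex (pos j) (pos k))

/-- Column reading order on nodes: components from last to first, then columns, then rows. -/
def nodeColLex (x y : Node) : Prop :=
  y.1 < x.1 ∨ (x.1 = y.1 ∧ (x.2.2 < y.2.2 ∨ (x.2.2 = y.2.2 ∧ x.2.1 < y.2.1)))

/-- `pos` is the column-reading tableau `t_μ` of `μ`: entries filled in order down the
columns, from the last component to the first. -/
def IsColReading {ℓ n : ℕ} (μ : Multicomp ℓ n) (pos : ℕ → Node) : Prop :=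
  IsTableau μ pos ∧ ∀ j k, 1 ≤ j → j ≤ n → 1 ≤ k → k ≤ n → (j < k ↔ nodeColLex (pos j) (pos k))

/-- `w` lies in the "symmetric group on `{a,…,b}`": it fixes every point outside `[a,b]`. -/
def FixesOutside (w : Equiv.Perm ℕ) (a b : ℕ) : Prop := ∀ k, k < a ∨ b < k → w k = k

/-- Coxeter length of a permutation of `{1,…,n}`, as the number of inversions. -/
def permLength (n : ℕ) (w : Equiv.Perm ℕ) : ℕ :=
  (((Finset.Icc 1 n) ×ˢ (Finset.Icc 1 n)).filter fun p => p.1 < p.2 ∧ w p.2 < w p.1).card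

/-- Right action of a permutation on a tableau (position function). -/
def actTab (pos : ℕ → Node) (w : Equiv.Perm ℕ) : ℕ → Node := fun k => pos (w k)

/-- `d` is the permutation `d(pos)` with `pos = tpos · d`, `tpos` the reference tableau. -/
def IsDPerm (n : ℕ) (tpos pos : ℕ → Node) (d : Equiv.Perm ℕ) : Prop :=
  FixesOutside d 1 n ∧ ∀ k, 1 ≤ k → k ≤ n → pos k = tpos (d k)

/-- The simple transposition `s_i = (i, i+1)`. -/
def swapP (i : ℕ) : Equiv.Perm ℕ := Equiv.swap i (i + 1)

/-- The product `s_{i₁} ⋯ s_{i_k}` of a word in the Coxeter generators. -/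
def wordProd (L : List ℕ) : Equiv.Perm ℕ := (L.map swapP).prod

/-- A reduced word for its product, using generators `s_1,…,s_{n-1}`. -/
def IsReducedWord (n : ℕ) (L : List ℕ) : Prop :=
  (∀ i ∈ L, 1 ≤ i ∧ i < n) ∧ L.length = permLength n (wordProd L)

/-- Bruhat order on `S_n`: some reduced expression of `u` is a subexpression of some
reduced expression of `w`. -/
def BruhatLE (n : ℕ) (u w : Equiv.Perm ℕ) : Prop :=
  ∃ ww uw : List ℕ, IsReducedWord n ww ∧ wordProd ww = w ∧
    uw.Sublist ww ∧ IsReducedWord n uw ∧ wordProd uw = u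

/-- Membership in the Young subgroup `S_μ`: `w` fixes `[1,n]` setwise, preserving each
row of the reference row-reading tableau `tpos = t^μ`. -/
def YoungMem (n : ℕ) (tpos : ℕ → Node) (w : Equiv.Perm ℕ) : Prop :=
  FixesOutside w 1 n ∧ ∀ k, 1 ≤ k → k ≤ n →
    (tpos (w k)).1 = (tpos k).1 ∧ (tpos (w k)).2.1 = (tpos k).2.1

/-- `accSize μ k = |μ^(1)| + ⋯ + |μ^(k)|`. -/
def accSize {ℓ n : ℕ} (μ : Multicomp ℓ n) (k : ℕ) : ℕ := ∑ j ∈ Finset.range k, μ.compSize j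

/-- The content of a node, with `ξinv` a fixed inverse of `ξ`:
`ξ^(c-r) Q_l` if `ξ ≠ 1` and `c - r + Q_l` if `ξ = 1`. -/
def contOfR {R : Type*} [CommRing R] (ξ ξinv : R) (Q : ℕ → R) (x : Node) : R :=
  if ξ = 1 then ((x.2.2 : R) - (x.2.1 : R)) + Q (x.1 + 1)
  else ξ ^ x.2.2 * ξinv ^ x.2.1 * Q (x.1 + 1)

/-- The set of contents `cont_s(k)` as `s` ranges over all standard tableaux of
multipartitions of `n`. -/
def ContSet (ℓ n : ℕ) {R : Type*} [CommRing R] (ξ ξinv : R) (Q : ℕ → R) (k : ℕ) : Set R :=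
  {c | ∃ (μ : Multicomp ℓ n) (pos : ℕ → Node), μ.IsMultipartition ∧ StandardTab μ pos ∧
        c = contOfR ξ ξinv Q (pos k)}

/-- The cyclotomic Hecke algebra of type `G(ℓ,1,n)`: an `R`-algebra `A` equipped with
generators satisfying the defining relations, together with the elements `T_w` and the
`*` anti-involution fixing the generators. -/
structure Hecke (R : Type*) [CommRing R] (A : Type*) [Ring A] [Algebra R A]
    (n ℓ : ℕ) (ξ : R) (Q : ℕ → R) where
  L : ℕ → A
  T : ℕ → A
  Tw : Equiv.Perm ℕ → A
  star : A →ₗ[R] A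
  cyclotomic : ((List.range ℓ).map fun k => L 1 - algebraMap R A (Q (k + 1))).prod = 0
  LL : ∀ r t, L r * L t = L t * L r
  quad : ∀ r, 1 ≤ r → r < n → (T r + 1) * (T r - algebraMap R A ξ) = 0
  TL : ∀ r, 1 ≤ r → r < n →
      T r * L r + (if ξ = 1 then 1 else 0) = L (r + 1) * (T r - algebraMap R A ξ + 1)
  braid : ∀ s, 1 ≤ s → s + 1 < n → T s * T (s + 1) * T s = T (s + 1) * T s * T (s + 1)
  TLfar : ∀ r t, 1 ≤ r → r < n → t ≠ r → t ≠ r + 1 → T r * L t = L t * T r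
  TTfar : ∀ r s, 1 ≤ r → r < n → 1 ≤ s → s < n → (r + 1 < s ∨ s + 1 < r) →
      T r * T s = T s * T r
  Tw_one : Tw 1 = 1
  Tw_mul : ∀ w i, 1 ≤ i → i < n → permLength n w < permLength n (w * swapP i) →
      Tw (w * swapP i) = Tw w * T i
  star_mul : ∀ a b, star (a * b) = star b * star a
  star_one : star 1 = 1
  star_L : ∀ r, star (L r) = L r
  star_T : ∀ r, star (T r) = T r

namespace Hecke

variable {R : Type*} [CommRing R] {A : Type*} [Ring A] [Algebra R A]
  {n ℓ : ℕ} {ξ : R} {Q : ℕ → R}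

/-- `x_μ = Σ_{w ∈ S_μ} T_w`, where `tpos = t^μ`. -/
def xElt (h : Hecke R A n ℓ ξ Q) (tpos : ℕ → Node) : A :=
  ∑ᶠ (w : Equiv.Perm ℕ) (_ : YoungMem n tpos w), h.Tw w

/-- `y_μ = Σ_{w ∈ S_μ} (-ξ)^{-ℓ(w)} T_w`. -/
def yElt (h : Hecke R A n ℓ ξ Q) (ξinv : R) (tpos : ℕ → Node) : A :=
  ∑ᶠ (w : Equiv.Perm ℕ) (_ : YoungMem n tpos w), ((-ξinv) ^ permLength n w) • h.Tw w

/-- `u⁺_μ = Π_{k=2}^{ℓ} Π_{m=1}^{|μ^(1)|+⋯+|μ^(k-1)|} (L_m - Q_k)`. -/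
def uPlus (h : Hecke R A n ℓ ξ Q) (μ : Multicomp ℓ n) : A :=
  ((List.range' 2 (ℓ - 1)).map fun k =>
    ((List.range' 1 (accSize μ (k - 1))).map fun m => h.L m - algebraMap R A (Q k)).prod).prod

/-- `u⁻_μ = Π_{k=1}^{ℓ-1} Π_{m=1}^{|μ^(1)|+⋯+|μ^(ℓ-k+1)|} (L_m - Q_k)`. -/
def uMinus (h : Hecke R A n ℓ ξ Q) (μ : Multicomp ℓ n) : A :=
  ((List.range' 1 (ℓ - 1)).map fun k =>
    ((List.range' 1 (accSize μ (ℓ - k + 1))).map fun m => h.L m - algebraMap R A (Q k)).prod).prod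

/-- `m_μ = u⁺_μ x_μ` (here `tpos = t^μ`). -/
def mmu (h : Hecke R A n ℓ ξ Q) (μ : Multicomp ℓ n) (tpos : ℕ → Node) : A :=
  h.uPlus μ * h.xElt tpos

/-- `n_μ = u⁻_μ y_μ`. -/
def nmu (h : Hecke R A n ℓ ξ Q) (ξinv : R) (μ : Multicomp ℓ n) (tpos : ℕ → Node) : A :=
  h.uMinus μ * h.yElt ξinv tpos

/-- The Murphy basis element `m_{st} = T_{d(s)}^* m_μ T_{d(t)}`. -/
def mst (h : Hecke R A n ℓ ξ Q) (μ : Multicomp ℓ n) (tpos : ℕ → Node)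
    (ds dt : Equiv.Perm ℕ) : A :=
  h.star (h.Tw ds) * h.mmu μ tpos * h.Tw dt

/-- The dual Murphy basis element `n_{st} = T_{d(s)}^* n_μ T_{d(t)}`. -/
def nst (h : Hecke R A n ℓ ξ Q) (ξinv : R) (μ : Multicomp ℓ n) (tpos : ℕ → Node)
    (ds dt : Equiv.Perm ℕ) : A :=
  h.star (h.Tw ds) * h.nmu ξinv μ tpos * h.Tw dt

end Hecke

/-- The element `F_t = Π_{k=1}^n Π_{c ∈ contents, c ≠ cont_t(k)}
`(L_k - c)/(cont_t(k) - c)` of the split semisimple cyclotomic Hecke algebra. -/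
def Ftab {K : Type*} [Field K] {A : Type*} [Ring A] [Algebra K A] {n ℓ : ℕ} {ξ : K}
    {Q : ℕ → K} (h : Hecke K A n ℓ ξ Q)
    (hfin : ∀ k, (ContSet ℓ n ξ ξ⁻¹ Q k).Finite) (t : ℕ → Node) : A :=
  ((List.range n).map fun k0 =>
    Finset.noncommProd
      (((hfin (k0 + 1)).toFinset).filter fun c => c ≠ contOfR ξ ξ⁻¹ Q (t (k0 + 1)))
      (fun c => algebraMap K A ((contOfR ξ ξ⁻¹ Q (t (k0 + 1)) - c)⁻¹) *
        (h.L (k0 + 1) - algebraMap K A c))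
      (by
        intro a _ b _ _
        have hc : ∀ (r : K) (z : A), Commute (algebraMap K A r) z := fun r z =>
          Algebra.commutes r z
        have c1 : Commute (h.L (k0 + 1) - algebraMap K A a)
            (h.L (k0 + 1) - algebraMap K A b) :=
          Commute.sub_left ((Commute.refl (h.L (k0 + 1))).sub_right ((hc b _).symm))
            (hc a _)
        exact Commute.mul_left (hc _ _)
          (Commute.mul_right ((hc _ _).symm) c1)
        )).prod

/-- The seminormal basis element `f_{st} = F_s m_{st} F_t`.  Here `tpos = t^μ` and
`ds, dt` are the permutations with `s = t^μ d(s)`, `t = t^μ d(t)`. -/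
def fElt {K : Type*} [Field K] {A : Type*} [Ring A] [Algebra K A] {n ℓ : ℕ} {ξ : K}
    {Q : ℕ → K} (h : Hecke K A n ℓ ξ Q)
    (hfin : ∀ k, (ContSet ℓ n ξ ξ⁻¹ Q k).Finite) (μ : Multicomp ℓ n)
    (tpos spos tpos' : ℕ → Node) (ds dt : Equiv.Perm ℕ) : A :=
  Ftab h hfin spos * h.mst μ tpos ds dt * Ftab h hfin tpos'

/-- Semisimplicity of the cyclotomic Hecke algebra, in the equivalent combinatorial form:
contents separate standard tableaux. -/
def SeparatedContents (ℓ n : ℕ) {R : Type*} [CommRing R] (ξ ξinv : R) (Q : ℕ → R) : Prop :=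
  ∀ (μ ν : Multicomp ℓ n) (s t : ℕ → Node), μ.IsMultipartition → ν.IsMultipartition →
    StandardTab μ s → StandardTab ν t →
    (∀ k, 1 ≤ k → k ≤ n → contOfR ξ ξinv Q (s k) = contOfR ξ ξinv Q (t k)) →
    ∀ k, 1 ≤ k → k ≤ n → s k = t k

/-! ## Residues, degrees and the quiver combinatorics -/

/-- The residue of a node: `c - r + κ_l (mod e)`. -/
def resOf (e : ℕ) (κ : ℕ → ℤ) (x : Node) : ZMod e :=
  (((x.2.2 : ℤ) - (x.2.1 : ℤ) + κ x.1 : ℤ) : ZMod e)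

/-- The entries of the Cartan matrix of the quiver `Γ_e`. -/
def cartanInt (e : ℕ) (i j : ZMod e) : ℤ :=
  (if i = j then 2 else 0) + (if j = i + 1 ∧ i ≠ j then -1 else 0) +
    (if j = i - 1 ∧ i ≠ j then -1 else 0)

/-- `x` is an addable node of the shape with row lengths `f` (with `ℓ` components). -/
def AddableNode (f : ℕ → ℕ → ℕ) (ℓ : ℕ) (x : Node) : Prop :=
  x.1 < ℓ ∧ x.2.2 = f x.1 x.2.1 ∧ (x.2.1 = 0 ∨ x.2.2 < f x.1 (x.2.1 - 1))

/-- `x` is a removable node of the shape with row lengths `f`. -/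
def RemovableNode (f : ℕ → ℕ → ℕ) (ℓ : ℕ) (x : Node) : Prop :=
  x.1 < ℓ ∧ x.2.2 + 1 = f x.1 x.2.1 ∧ f x.1 (x.2.1 + 1) ≤ x.2.2

/-- `x` is strictly below `y`. -/
def Below (x y : Node) : Prop := y.1 < x.1 ∨ (x.1 = y.1 ∧ y.2.1 < x.2.1)

/-- A finite region containing all relevant nodes. -/
def nodeRegion (ℓ n : ℕ) : Finset Node :=
  (Finset.range ℓ) ×ˢ (Finset.range (n + 1)) ×ˢ (Finset.range (n + 1))

/-- `d_A(μ) = #{addable i-nodes below A} - #{removable i-nodes below A}` (same residue). -/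
def dBelow (e ℓ n : ℕ) (κ : ℕ → ℤ) (f : ℕ → ℕ → ℕ) (A : Node) : ℤ :=
  ((((nodeRegion ℓ n).filter fun x =>
      AddableNode f ℓ x ∧ resOf e κ x = resOf e κ A ∧ Below x A).card : ℤ)) -
  (((nodeRegion ℓ n).filter fun x =>
      RemovableNode f ℓ x ∧ resOf e κ x = resOf e κ A ∧ Below x A).card : ℤ)

/-- `d^A(μ)`: the same with "above" in place of "below". -/
def dAbove (e ℓ n : ℕ) (κ : ℕ → ℤ) (f : ℕ → ℕ → ℕ) (A : Node) : ℤ :=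
  ((((nodeRegion ℓ n).filter fun x =>
      AddableNode f ℓ x ∧ resOf e κ x = resOf e κ A ∧ Below A x).card : ℤ)) -
  (((nodeRegion ℓ n).filter fun x =>
      RemovableNode f ℓ x ∧ resOf e κ x = resOf e κ A ∧ Below A x).card : ℤ)

/-- The shape (row-length function) of the subtableau of `pos` on entries `1,…,m`. -/
def subShape (pos : ℕ → Node) (m : ℕ) : ℕ → ℕ → ℕ := fun l r => cnt pos m l r

/-- The Brundan–Kleshchev–Wang degree of a standard tableau. -/
def degTab (e ℓ n : ℕ) (κ : ℕ → ℤ) (pos : ℕ → Node) : ℤ :=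
  ∑ k ∈ Finset.range n, dBelow e ℓ n κ (subShape pos k) (pos (k + 1))

/-- The codegree of a standard tableau. -/
def codegTab (e ℓ n : ℕ) (κ : ℕ → ℤ) (pos : ℕ → Node) : ℤ :=
  ∑ k ∈ Finset.range n, dAbove e ℓ n κ (subShape pos k) (pos (k + 1))

/-- `(Λ, β)` where `β = Σ_k α_{res(k)}` for the residue sequence of `pos`. -/
def lamBeta (e ℓ n : ℕ) (κ : ℕ → ℤ) (pos : ℕ → Node) : ℤ :=
  ∑ k ∈ Finset.range n,
    (((Finset.range ℓ).filter fun l => ((κ l : ZMod e)) = resOf e κ (pos (k + 1))).card : ℤ)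

/-- `(β, β)` for `β = Σ_k α_{res(k)}`. -/
def betaBeta (e ℓ n : ℕ) (κ : ℕ → ℤ) (pos : ℕ → Node) : ℤ :=
  ∑ j ∈ Finset.range n, ∑ k ∈ Finset.range n,
    cartanInt e (resOf e κ (pos (j + 1))) (resOf e κ (pos (k + 1)))

/-- The defect `(Λ, β) - (β, β)/2` of the block containing `pos`. -/
def defectOf (e ℓ n : ℕ) (κ : ℕ → ℤ) (pos : ℕ → Node) : ℤ :=
  lamBeta e ℓ n κ pos - betaBeta e ℓ n κ pos / 2

/-- The conjugate of a node (for a shape with `ℓ` components). -/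
def conjNode (ℓ : ℕ) (x : Node) : Node := (ℓ - 1 - x.1, x.2.2, x.2.1)

/-- The sequence obtained by swapping places `s` and `s+1`. -/
def swapSeq {e : ℕ} (s : ℕ) (i : ℕ → ZMod e) : ℕ → ZMod e :=
  fun k => if k = s then i (s + 1) else if k = s + 1 then i s else i k


/-- The cyclotomic quiver Hecke (KLR) algebra `R_n^Λ` of type `Γ_e`: an `R`-algebra `A`
with generators satisfying the KLR relations, together with its grading and the graded
anti-involution fixing the generators.  Idempotents are indexed by residue sequences
`i : ℕ → ZMod e` (only the values at `1,…,n` matter); `Λm j = (Λ, α_j)`. -/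
structure KLR (R : Type*) [CommRing R] (A : Type*) [Ring A] [Algebra R A]
    (e n : ℕ) (Λm : ZMod e → ℕ) where
  E : (ℕ → ZMod e) → A
  Y : ℕ → A
  Psi : ℕ → A
  star : A →ₗ[R] A
  GS : ℤ → Submodule R A
  E_ext : ∀ i j : ℕ → ZMod e, (∀ k, 1 ≤ k → k ≤ n → i k = j k) → E i = E j
  orth : ∀ i j : ℕ → ZMod e,
      E i * E j = if (∀ k, 1 ≤ k → k ≤ n → i k = j k) then E i else 0
  sumE : ∀ S : Finset (ℕ → ZMod e),
      (∀ j ∈ S, ∀ j' ∈ S, (∀ k, 1 ≤ k → k ≤ n → j k = j' k) → j = j') →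
      (∀ i : ℕ → ZMod e, ∃ j ∈ S, ∀ k, 1 ≤ k → k ≤ n → i k = j k) →
      ∑ j ∈ S, E j = 1
  cyc : ∀ i : ℕ → ZMod e, Y 1 ^ (Λm (i 1)) * E i = 0
  YE : ∀ (i : ℕ → ZMod e) (r : ℕ), Y r * E i = E i * Y r
  PsiE : ∀ (i : ℕ → ZMod e) (s : ℕ), Psi s * E i = E (swapSeq s i) * Psi s
  YY : ∀ r s, Y r * Y s = Y s * Y r
  PsiY : ∀ r s, 1 ≤ s → s < n → r ≠ s → r ≠ s + 1 → Psi s * Y r = Y r * Psi s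
  PsiPsi : ∀ r s, r + 1 < s ∨ s + 1 < r → Psi r * Psi s = Psi s * Psi r
  PsiYE : ∀ (i : ℕ → ZMod e) (r : ℕ), 1 ≤ r → r < n →
      Psi r * Y (r + 1) * E i =
        (if i r = i (r + 1) then Y r * Psi r + 1 else Y r * Psi r) * E i
  YPsiE : ∀ (i : ℕ → ZMod e) (r : ℕ), 1 ≤ r → r < n →
      Y (r + 1) * Psi r * E i =
        (if i r = i (r + 1) then Psi r * Y r + 1 else Psi r * Y r) * E i
  PsiSq : ∀ (i : ℕ → ZMod e) (r : ℕ), 1 ≤ r → r < n →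
      Psi r * Psi r * E i =
        if i r = i (r + 1) then 0
        else if i (r + 1) ≠ i r + 1 ∧ i (r + 1) ≠ i r - 1 then E i
        else if e ≠ 2 ∧ i (r + 1) = i r + 1 then (Y (r + 1) - Y r) * E i
        else if e ≠ 2 ∧ i (r + 1) = i r - 1 then (Y r - Y (r + 1)) * E i
        else (Y (r + 1) - Y r) * (Y r - Y (r + 1)) * E i
  braid : ∀ (i : ℕ → ZMod e) (r : ℕ), 1 ≤ r → r + 1 < n →
      Psi r * Psi (r + 1) * Psi r * E i =
        (if e ≠ 2 ∧ i (r + 2) = i r ∧ i (r + 1) = i r + 1 then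
            Psi (r + 1) * Psi r * Psi (r + 1) + 1
         else if e ≠ 2 ∧ i (r + 2) = i r ∧ i r = i (r + 1) + 1 then
            Psi (r + 1) * Psi r * Psi (r + 1) - 1
         else if e = 2 ∧ i (r + 2) = i r ∧ i r = i (r + 1) + 1 then
            Psi (r + 1) * Psi r * Psi (r + 1) + Y r - Y (r + 1) - Y (r + 1) + Y (r + 2)
         else Psi (r + 1) * Psi r * Psi (r + 1)) * E i
  star_mul : ∀ a b, star (a * b) = star b * star a
  star_E : ∀ i, star (E i) = E i
  star_Y : ∀ r, star (Y r) = Y r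
  star_Psi : ∀ s, star (Psi s) = Psi s
  E_mem : ∀ i, E i ∈ GS 0
  Y_mem : ∀ r, Y r ∈ GS 2
  Psi_mem : ∀ (i : ℕ → ZMod e) (s : ℕ), Psi s * E i ∈ GS (-(cartanInt e (i s) (i (s + 1))))
  GS_mul : ∀ (d d' : ℤ) (a b : A), a ∈ GS d → b ∈ GS d' → a * b ∈ GS (d + d')

namespace KLR

variable {R : Type*} [CommRing R] {A : Type*} [Ring A] [Algebra R A]
  {e n : ℕ} {Λm : ZMod e → ℕ}

/-- `ψ_{i₁} ⋯ ψ_{i_k}` for a (reduced) word. -/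
def psiWord (Kk : KLR R A e n Λm) (L : List ℕ) : A := (L.map Kk.Psi).prod

/-- The residue sequence of a tableau. -/
def resSeq (e : ℕ) (κ : ℕ → ℤ) (pos : ℕ → Node) : ℕ → ZMod e := fun k => resOf e κ (pos k)

/-- The monomial `y_μ = y_1^{d_1} ⋯ y_n^{d_n}` of Hu–Mathas, where `tpos = t^μ` and
`d_m = d_{A_m}(μ_m)`. -/
def yMu (Kk : KLR R A e n Λm) (ℓ : ℕ) (κ : ℕ → ℤ) (tpos : ℕ → Node) : A :=
  ((List.range n).map fun m0 =>
    Kk.Y (m0 + 1) ^ (dBelow e ℓ n κ (subShape tpos m0) (tpos (m0 + 1))).toNat).prod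

/-- The monomial `y'_μ = y_1^{d'_1} ⋯ y_n^{d'_n}`, computed from `t_{μ'}`, the conjugate
of `tpos = t^μ`, with `d'_m = d^{A'_m}(μ'_m)`. -/
def yMu' (Kk : KLR R A e n Λm) (ℓ : ℕ) (κ : ℕ → ℤ) (tpos : ℕ → Node) : A :=
  ((List.range n).map fun m0 =>
    Kk.Y (m0 + 1) ^
      (dAbove e ℓ n κ (subShape (fun k => conjNode ℓ (tpos k)) m0)
        (conjNode ℓ (tpos (m0 + 1)))).toNat).prod

/-- The Hu–Mathas basis element `ψ_{st} = ψ_{d(s)}^⋆ e_μ y_μ ψ_{d(t)}`, where `tpos = t^μ`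
and `ws, wt` are the chosen reduced words for `d(s), d(t)`. -/
def psiST (Kk : KLR R A e n Λm) (ℓ : ℕ) (κ : ℕ → ℤ) (tpos : ℕ → Node)
    (ws wt : List ℕ) : A :=
  Kk.star (Kk.psiWord ws) * Kk.E (resSeq e κ tpos) * Kk.yMu ℓ κ tpos * Kk.psiWord wt

/-- The dual basis element `ψ'_{st} = ψ_{d(s)}^⋆ e'_μ y'_μ ψ_{d(t)}`, where
`e'_μ = e(res(t_{μ'}))` and `t_{μ'}` is the conjugate of `tpos = t^μ`. -/
def psiST' (Kk : KLR R A e n Λm) (ℓ : ℕ) (κ : ℕ → ℤ) (tpos : ℕ → Node)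
    (ws wt : List ℕ) : A :=
  Kk.star (Kk.psiWord ws) * Kk.E (resSeq e κ fun k => conjNode ℓ (tpos k)) *
    Kk.yMu' ℓ κ tpos * Kk.psiWord wt

end KLR

/-!
Induct on `b`. The entry `x` directly below `a` in `s` lies in `(a, b]`; if `x < b`, recurse on
`(a, x)`. Otherwise `b` sits directly below `a`. Let `h` be the last entry of `[a, b)` whose row
is weakly above the row of `a`, so that every entry of `(h, b]` lies strictly below that row. If
`h = a`, cycling `a, …, b - 1` brings `a` to `b - 1`, directly above `b`. If `h > a`, cycling
`h, …, b` brings `b` to `b - 1`, still in the column of `a`, and we recurse on `(a, b - 1)`.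

Such a cycle keeps `s` standard because, `λ` being a multipartition, no entry of the window lies
to the right of or below its first entry; and it adds to the length of `d(s)`, because the
row-reading order places the first entry of the window before all the others.
-/

lemma exists_greatest_of_lt {P : ℕ → Prop} {a b : ℕ} (hab : a < b) (ha : P a) :
    ∃ h, a ≤ h ∧ h < b ∧ P h ∧ ∀ q, h < q → q < b → ¬ P q := by
  let Q q := a ≤ q ∧ P q
  have hQ : Q (Nat.findGreatest Q (b - 1)) := Nat.findGreatest_spec (by omega) ⟨le_rfl, ha⟩
  refine ⟨_, hQ.1, by have := Nat.findGreatest_le (P := Q) (b - 1); omega, hQ.2,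
    fun q hq hqb hPq => Nat.findGreatest_is_greatest hq (by omega) ⟨by omega, hPq⟩⟩

namespace FixesOutside

variable {w w' : Equiv.Perm ℕ} {a b : ℕ}

lemma apply_mem (hw : FixesOutside w a b) {k : ℕ} (hak : a ≤ k) (hkb : k ≤ b) :
    a ≤ w k ∧ w k ≤ b := by
  by_contra hout
  have := w.injective (hw (w k) (by omega))
  omega

lemma symm (hw : FixesOutside w a b) : FixesOutside w.symm a b :=
  fun k hk => w.symm_apply_eq.2 (hw k hk).symm

lemma mono (hw : FixesOutside w a b) {a' b' : ℕ} (ha : a' ≤ a) (hb : b ≤ b') :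
    FixesOutside w a' b' :=
  fun k hk => hw k (by omega)

lemma mul (hw : FixesOutside w a b) (hw' : FixesOutside w' a b) :
    FixesOutside (w * w') a b :=
  fun k hk => by rw [Equiv.Perm.mul_apply, hw' k hk, hw k hk]

end FixesOutside

section Length

variable {n : ℕ} {x y z : Equiv.Perm ℕ}

def inversions (n : ℕ) (w : Equiv.Perm ℕ) : Finset (ℕ × ℕ) :=
  (Finset.Icc 1 n ×ˢ Finset.Icc 1 n).filter fun p => p.1 < p.2 ∧ w p.2 < w p.1

lemma permLength_eq_card_inversions (w : Equiv.Perm ℕ) :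
    permLength n w = (inversions n w).card := rfl

lemma mem_inversions {w : Equiv.Perm ℕ} {p : ℕ × ℕ} :
    p ∈ inversions n w ↔
      (1 ≤ p.1 ∧ p.1 ≤ n) ∧ (1 ≤ p.2 ∧ p.2 ≤ n) ∧ p.1 < p.2 ∧ w p.2 < w p.1 := by
  simp only [inversions, Finset.mem_filter, Finset.mem_product, Finset.mem_Icc, and_assoc]

lemma mapsTo_inversions_mul_sdiff (hy : FixesOutside y 1 n) :
    Set.MapsTo (fun p : ℕ × ℕ => (y p.1, y p.2))
      ↑(inversions n (x * y) \ inversions n y) ↑(inversions n x) := by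
  intro p hp
  simp only [Finset.coe_sdiff, Set.mem_sdiff, Finset.mem_coe, mem_inversions,
    Equiv.Perm.mul_apply] at hp ⊢
  obtain ⟨⟨⟨hp1, hp1'⟩, ⟨hp2, hp2'⟩, hlt, hx⟩, hny⟩ := hp
  have := hy.apply_mem hp1 hp1'
  have := hy.apply_mem hp2 hp2'
  have := y.injective.ne hlt.ne
  omega

lemma mapsTo_inversions_symm (hy : FixesOutside y 1 n)
    (hsub : inversions n y ⊆ inversions n (x * y)) :
    Set.MapsTo (fun q : ℕ × ℕ => (y.symm q.1, y.symm q.2))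
      ↑(inversions n x) ↑(inversions n (x * y) \ inversions n y) := by
  intro q hq
  simp only [Finset.coe_sdiff, Set.mem_sdiff, Finset.mem_coe] at hq ⊢
  rw [mem_inversions] at hq
  obtain ⟨⟨hq1, hq1'⟩, ⟨hq2, hq2'⟩, hlt, hx⟩ := hq
  have := hy.symm.apply_mem hq1 hq1'
  have := hy.symm.apply_mem hq2 hq2'
  have hne := y.symm.injective.ne hlt.ne
  have hord : y.symm q.1 < y.symm q.2 := by
    by_contra hge
    have hmem := hsub (show (y.symm q.2, y.symm q.1) ∈ inversions n y from
      mem_inversions.2 ⟨by omega, by omega, by omega, by simpa only [Equiv.apply_symm_apply]⟩)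
    simp only [mem_inversions, Equiv.Perm.mul_apply, Equiv.apply_symm_apply] at hmem
    omega
  simp only [mem_inversions, Equiv.Perm.mul_apply, Equiv.apply_symm_apply]
  omega

lemma permLength_mul_le (hy : FixesOutside y 1 n) :
    permLength n (x * y) ≤ permLength n x + permLength n y := by
  simp only [permLength_eq_card_inversions]
  calc (inversions n (x * y)).card
      ≤ (inversions n (x * y) \ inversions n y).card + (inversions n y).card :=
        Finset.card_le_card_sdiff_add_card
    _ ≤ (inversions n x).card + (inversions n y).card := by
        refine Nat.add_le_add_right
          (Finset.card_le_card_of_injOn _ (mapsTo_inversions_mul_sdiff hy) ?_) _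
        intro p _ q _ hpq
        simp only [Prod.mk.injEq, EmbeddingLike.apply_eq_iff_eq] at hpq
        exact Prod.ext hpq.1 hpq.2

lemma permLength_mul_of_inversions_subset (hy : FixesOutside y 1 n)
    (hsub : inversions n y ⊆ inversions n (x * y)) :
    permLength n (x * y) = permLength n x + permLength n y := by
  refine le_antisymm (permLength_mul_le hy) ?_
  have hx : (inversions n x).card ≤ (inversions n (x * y) \ inversions n y).card := by
    refine Finset.card_le_card_of_injOn _ (mapsTo_inversions_symm hy hsub) ?_
    intro p _ q _ hpq
    simp only [Prod.mk.injEq, EmbeddingLike.apply_eq_iff_eq] at hpq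
    exact Prod.ext hpq.1 hpq.2
  have := Finset.card_sdiff_add_card_eq_card hsub
  simp only [permLength_eq_card_inversions]
  omega

lemma permLength_mul_mul_eq (hy : FixesOutside y 1 n) (hz : FixesOutside z 1 n)
    (hxy : permLength n (x * y) = permLength n x + permLength n y)
    (hxyz : permLength n (x * y * z) = permLength n (x * y) + permLength n z) :
    permLength n (x * (y * z)) = permLength n x + permLength n (y * z) := by
  have := permLength_mul_le (x := x) (hy.mul hz)
  have := permLength_mul_le (x := y) hz
  rw [← mul_assoc] at *
  omega

end Length

section Cycle

variable {h m k : ℕ}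

/-- The cycle `(h h+1 … m)`; the identity when `m < h`. -/
def cycleIcc (h m : ℕ) : Equiv.Perm ℕ where
  toFun k := if h ≤ k ∧ k < m then k + 1 else if k = m ∧ h ≤ m then h else k
  invFun k := if h < k ∧ k ≤ m then k - 1 else if k = h ∧ h ≤ m then m else k
  left_inv k := by dsimp only; split_ifs <;> omega
  right_inv k := by dsimp only; split_ifs <;> omega

lemma cycleIcc_apply (k : ℕ) :
    cycleIcc h m k = if h ≤ k ∧ k < m then k + 1 else if k = m ∧ h ≤ m then h else k := rfl

lemma cycleIcc_symm_apply (k : ℕ) :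
    (cycleIcc h m).symm k = if h < k ∧ k ≤ m then k - 1 else if k = h ∧ h ≤ m then m else k :=
  rfl

lemma fixesOutside_cycleIcc : FixesOutside (cycleIcc h m) h m := fun k hk => by
  rw [cycleIcc_apply]; split_ifs <;> omega

lemma cycleIcc_apply_right (hhm : h ≤ m) : cycleIcc h m m = h := by
  rw [cycleIcc_apply]; split_ifs <;> omega

lemma cycleIcc_apply_of_mem (hhk : h ≤ k) (hkm : k < m) : cycleIcc h m k = k + 1 := by
  rw [cycleIcc_apply]; split_ifs <;> omega

lemma mem_inversions_cycleIcc {n i j : ℕ} (hij : (i, j) ∈ inversions n (cycleIcc h m)) :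
    h ≤ i ∧ i < m ∧ j = m := by
  rw [mem_inversions, cycleIcc_apply, cycleIcc_apply] at hij
  split_ifs at hij <;> omega

end Cycle

def PrecedesInLine (x y : Node) : Prop :=
  x.1 = y.1 ∧ ((x.2.1 = y.2.1 ∧ x.2.2 < y.2.2) ∨ (x.2.2 = y.2.2 ∧ x.2.1 < y.2.1))

def RowLE (x y : Node) : Prop := x.1 < y.1 ∨ (x.1 = y.1 ∧ x.2.1 ≤ y.2.1)

lemma rowLE_refl (x : Node) : RowLE x x := Or.inr ⟨rfl, le_rfl⟩

lemma nodeLex_of_rowLE {x y z : Node} (hx : RowLE x z) (hy : ¬ RowLE y z) : nodeLex x y := by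
  unfold RowLE at hx hy
  unfold nodeLex
  omega

lemma Multicomp.IsMultipartition.mem_of_le_row {ℓ n : ℕ} {lam : Multicomp ℓ n}
    (hl : lam.IsMultipartition) {l r r' c : ℕ} (hmem : lam.mem (l, r', c)) (hr : r ≤ r') :
    lam.mem (l, r, c) :=
  lt_of_lt_of_le hmem (antitone_nat_of_succ_le (hl l) hr)

lemma IsRowReading.sameRow_of_le {ℓ n : ℕ} {mu : Multicomp ℓ n} {tm : ℕ → Node}
    (htm : IsRowReading mu tm) {a b k : ℕ} (ha : 1 ≤ a) (hb : b ≤ n)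
    (hrow : (tm a).1 = (tm b).1 ∧ (tm a).2.1 = (tm b).2.1) (hak : a ≤ k) (hkb : k ≤ b) :
    (tm a).1 = (tm k).1 ∧ (tm a).2.1 = (tm k).2.1 := by
  obtain rfl | hak := hak.eq_or_lt
  · exact ⟨rfl, rfl⟩
  obtain rfl | hkb := hkb.eq_or_lt
  · exact hrow
  have h1 := (htm.2 a k ha (by omega) (by omega) (by omega)).1 hak
  have h2 := (htm.2 k b (by omega) (by omega) (by omega) hb).1 hkb
  unfold nodeLex at h1 h2
  omega

section Tableau

variable {ℓ n : ℕ} {lam : Multicomp ℓ n} {s tl : ℕ → Node} {ds w : Equiv.Perm ℕ}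

lemma IsTableau.actTab (hs : IsTableau lam s) (hw : FixesOutside w 1 n) :
    IsTableau lam (actTab s w) := by
  obtain ⟨hinj, hmem, hsurj⟩ := hs
  refine ⟨fun j k hj hj' hk hk' hjk => ?_, fun k hk hk' => ?_, fun x hx => ?_⟩
  · have := hw.apply_mem hj hj'
    have := hw.apply_mem hk hk'
    exact w.injective (hinj _ _ (by omega) (by omega) (by omega) (by omega) hjk)
  · have := hw.apply_mem hk hk'
    exact hmem _ (by omega) (by omega)
  · obtain ⟨k, hk, hk', rfl⟩ := hsurj x hx
    have := hw.symm.apply_mem hk hk'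
    exact ⟨w.symm k, by omega, by omega,
      by simp only [SpechtInduction.actTab, Equiv.apply_symm_apply]⟩

lemma IsDPerm.actTab (hds : IsDPerm n tl s ds) (hw : FixesOutside w 1 n) :
    IsDPerm n tl (actTab s w) (ds * w) := by
  refine ⟨hds.1.mul hw, fun k hk hk' => ?_⟩
  have := hw.apply_mem hk hk'
  exact hds.2 (w k) (by omega) (by omega)

lemma IsDPerm.lt_of_nodeLex (htl : IsRowReading lam tl) (hds : IsDPerm n tl s ds)
    {p q : ℕ} (hp : 1 ≤ p) (hp' : p ≤ n) (hq : 1 ≤ q) (hq' : q ≤ n)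
    (hlex : nodeLex (s p) (s q)) : ds p < ds q := by
  have := hds.1.apply_mem hp hp'
  have := hds.1.apply_mem hq hq'
  rw [hds.2 p hp hp', hds.2 q hq hq'] at hlex
  exact (htl.2 _ _ (by omega) (by omega) (by omega) (by omega)).2 hlex

lemma standardTab_iff : StandardTab lam s ↔ IsTableau lam s ∧
    ∀ j k, 1 ≤ j → j ≤ n → 1 ≤ k → k ≤ n → PrecedesInLine (s j) (s k) → j < k := by
  unfold StandardTab RowStandard ColStandard PrecedesInLine
  constructor
  · rintro ⟨⟨ht, hrow⟩, -, hcol⟩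
    refine ⟨ht, fun j k hj hj' hk hk' ⟨hc, hrc⟩ => ?_⟩
    rcases hrc with ⟨hr, hlt⟩ | ⟨hr, hlt⟩
    exacts [hrow j k hj hj' hk hk' hc hr hlt, hcol j k hj hj' hk hk' hc hr hlt]
  · rintro ⟨ht, hlt⟩
    exact ⟨⟨ht, fun j k hj hj' hk hk' hc hr h => hlt j k hj hj' hk hk' ⟨hc, Or.inl ⟨hr, h⟩⟩⟩,
      ⟨ht, fun j k hj hj' hk hk' hc hr h => hlt j k hj hj' hk hk' ⟨hc, Or.inr ⟨hr, h⟩⟩⟩⟩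

namespace StandardTab

lemma exists_eq (hs : StandardTab lam s) {x : Node} (hx : lam.mem x) :
    ∃ k, 1 ≤ k ∧ k ≤ n ∧ s k = x :=
  hs.1.1.2.2 x hx

lemma lt_of_sameRow (hs : StandardTab lam s) {j k : ℕ} (hj : 1 ≤ j) (hj' : j ≤ n)
    (hk : 1 ≤ k) (hk' : k ≤ n) (hc : (s j).1 = (s k).1) (hr : (s j).2.1 = (s k).2.1)
    (hlt : (s j).2.2 < (s k).2.2) : j < k :=
  hs.1.2 j k hj hj' hk hk' hc hr hlt

lemma lt_of_sameCol (hs : StandardTab lam s) {j k : ℕ} (hj : 1 ≤ j) (hj' : j ≤ n)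
    (hk : 1 ≤ k) (hk' : k ≤ n) (hc : (s j).1 = (s k).1) (hcol : (s j).2.2 = (s k).2.2)
    (hlt : (s j).2.1 < (s k).2.1) : j < k :=
  hs.2.2 j k hj hj' hk hk' hc hcol hlt

lemma le_of_sameCol (hs : StandardTab lam s) {j k : ℕ} (hj : 1 ≤ j) (hj' : j ≤ n)
    (hk : 1 ≤ k) (hk' : k ≤ n) (hc : (s j).1 = (s k).1) (hcol : (s j).2.2 = (s k).2.2)
    (hle : (s j).2.1 ≤ (s k).2.1) : j ≤ k := by
  obtain hr | hlt := hle.eq_or_lt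
  · exact (hs.1.1.1 j k hj hj' hk hk' (Prod.ext hc (Prod.ext hr hcol))).le
  · exact (hs.lt_of_sameCol hj hj' hk hk' hc hcol hlt).le

lemma actTab (hs : StandardTab lam s) (hw : FixesOutside w 1 n)
    (hord : ∀ p q, 1 ≤ p → p ≤ n → 1 ≤ q → q ≤ n → p < q → PrecedesInLine (s p) (s q) →
      w.symm p < w.symm q) :
    StandardTab lam (SpechtInduction.actTab s w) := by
  refine standardTab_iff.2 ⟨hs.1.1.actTab hw, fun j k hj hj' hk hk' hjk => ?_⟩
  have := hw.apply_mem hj hj'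
  have := hw.apply_mem hk hk'
  have hlt := (standardTab_iff.1 hs).2 _ _ (by omega) (by omega) (by omega) (by omega) hjk
  simpa only [Equiv.symm_apply_apply] using
    hord _ _ (by omega) (by omega) (by omega) (by omega) hlt hjk

/-- Cycling `h, …, m` changes only the relative order of `h` and the entries of `(h, m]`. -/
lemma actTab_cycleIcc (hs : StandardTab lam s) {h m : ℕ} (hh : 1 ≤ h) (hmn : m ≤ n)
    (hline : ∀ q, h < q → q ≤ m → ¬ PrecedesInLine (s h) (s q)) :
    StandardTab lam (SpechtInduction.actTab s (cycleIcc h m)) := by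
  refine hs.actTab (fixesOutside_cycleIcc.mono hh hmn) fun p q _ _ _ _ hpq hprec => ?_
  by_cases hp : p = h ∧ h < q ∧ q ≤ m
  · obtain ⟨rfl, hq, hq'⟩ := hp
    exact absurd hprec (hline q hq hq')
  · rw [cycleIcc_symm_apply, cycleIcc_symm_apply]
    split_ifs <;> omega

lemma exists_eq_below (hl : lam.IsMultipartition) (hs : StandardTab lam s) {a b : ℕ}
    (ha : 1 ≤ a) (hab : a < b) (hb : b ≤ n)
    (hcol : (s a).1 = (s b).1 ∧ (s a).2.2 = (s b).2.2) :
    ∃ x, a < x ∧ x ≤ b ∧ s x = ((s a).1, (s a).2.1 + 1, (s a).2.2) := by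
  have hrow : (s a).2.1 < (s b).2.1 := by
    by_contra! hle
    have := hs.le_of_sameCol (by omega) hb ha (by omega) hcol.1.symm hcol.2.symm hle
    omega
  have hmem : lam.mem ((s a).1, (s b).2.1, (s a).2.2) := by
    show (s a).2.2 < lam.rowLen (s a).1 (s b).2.1
    rw [hcol.1, hcol.2]
    exact hs.1.1.2.1 b (by omega) hb
  obtain ⟨x, hx, hx', hsx⟩ := hs.exists_eq (hl.mem_of_le_row hmem hrow)
  refine ⟨x, ?_, ?_, hsx⟩
  · exact hs.lt_of_sameCol ha (by omega) hx hx' (by rw [hsx]) (by rw [hsx])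
      (by simp only [hsx]; omega)
  · exact hs.le_of_sameCol hx hx' (by omega) hb (by rw [hsx, hcol.1]) (by rw [hsx, hcol.2])
      (by simp only [hsx]; omega)

end StandardTab

end Tableau

section Move

variable {ℓ n : ℕ} {lam : Multicomp ℓ n} {s tl : ℕ → Node} {ds : Equiv.Perm ℕ}

/-- A `q` to the right of or below `h` would force `h < a`, `q ≥ b` or `q > b`, according as the
column of `h` is left of, equal to or right of that of `a`. -/
lemma StandardTab.not_precedesInLine_of_rowLE (hl : lam.IsMultipartition)
    (hs : StandardTab lam s) {a b h q : ℕ} (ha : 1 ≤ a) (hb : b ≤ n)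
    (hbelow : s b = ((s a).1, (s a).2.1 + 1, (s a).2.2))
    (hah : a ≤ h) (hhq : h < q) (hqb : q ≤ b) (hqa : h = a → q < b)
    (hhigh : RowLE (s h) (s a)) (hlow : ¬ RowLE (s q) (s a)) :
    ¬ PrecedesInLine (s h) (s q) := by
  unfold RowLE at hhigh hlow
  rintro ⟨hc, ⟨hr, -⟩ | ⟨hcol, hr⟩⟩
  · omega
  have hch : (s h).1 = (s a).1 := by omega
  have hcq : (s q).1 = (s a).1 := by omega
  have hrh : (s h).2.1 ≤ (s a).2.1 := by omega
  have hrq : (s a).2.1 < (s q).2.1 := by omega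
  simp only [Prod.ext_iff] at hbelow
  rcases lt_trichotomy (s h).2.2 (s a).2.2 with hlt | heq | hgt
  · have hmem : lam.mem ((s a).1, (s a).2.1, (s h).2.2) :=
      lt_trans hlt (hs.1.1.2.1 a ha (by omega))
    obtain ⟨z, hz, hz', hsz⟩ := hs.exists_eq hmem
    simp only [Prod.ext_iff] at hsz
    have := hs.lt_of_sameRow (j := z) (k := a) hz hz' ha (by omega) (by omega) (by omega)
      (by omega)
    have := hs.le_of_sameCol (j := h) (k := z) (by omega) (by omega) hz hz' (by omega)
      (by omega) (by omega)
    omega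
  · have := hs.le_of_sameCol (j := h) (k := a) (by omega) (by omega) ha (by omega) hch heq hrh
    have := hs.le_of_sameCol (j := b) (k := q) (by omega) hb (by omega) (by omega) (by omega)
      (by omega) (by omega)
    omega
  · have hmemq : lam.mem ((s a).1, (s q).2.1, (s h).2.2) := by
      show (s h).2.2 < lam.rowLen (s a).1 (s q).2.1
      rw [hcol, ← hcq]
      exact hs.1.1.2.1 q (by omega) (by omega)
    obtain ⟨z, hz, hz', hsz⟩ := hs.exists_eq (hl.mem_of_le_row hmemq hrq)
    simp only [Prod.ext_iff] at hsz
    have := hs.lt_of_sameRow (j := b) (k := z) (by omega) hb hz hz' (by omega) (by omega)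
      (by omega)
    have := hs.le_of_sameCol (j := z) (k := q) hz hz' (by omega) (by omega) (by omega)
      (by omega) (by omega)
    omega

lemma IsDPerm.permLength_mul_cycleIcc (htl : IsRowReading lam tl) (hds : IsDPerm n tl s ds)
    {h m : ℕ} (hh : 1 ≤ h) (hmn : m ≤ n) (hlex : ∀ q, h < q → q ≤ m → nodeLex (s h) (s q)) :
    permLength n (ds * cycleIcc h m) = permLength n ds + permLength n (cycleIcc h m) := by
  refine permLength_mul_of_inversions_subset (fixesOutside_cycleIcc.mono hh hmn) ?_
  rintro ⟨i, j⟩ hij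
  obtain ⟨hhi, him, rfl⟩ := mem_inversions_cycleIcc hij
  obtain ⟨hi, hj, hlt, -⟩ := mem_inversions.1 hij
  refine mem_inversions.2 ⟨hi, hj, hlt, ?_⟩
  simp only [Equiv.Perm.mul_apply, cycleIcc_apply_right (hhi.trans him.le),
    cycleIcc_apply_of_mem hhi him]
  exact hds.lt_of_nodeLex htl hh (by omega) (by omega) (by omega) (hlex _ (by omega) (by omega))

lemma cycleIcc_move (hl : lam.IsMultipartition) (htl : IsRowReading lam tl)
    (hs : StandardTab lam s) (hds : IsDPerm n tl s ds) {a b h m : ℕ} (ha : 1 ≤ a) (hb : b ≤ n)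
    (hbelow : s b = ((s a).1, (s a).2.1 + 1, (s a).2.2))
    (hah : a ≤ h) (hmb : m ≤ b) (hma : h = a → m < b) (hhigh : RowLE (s h) (s a))
    (hlow : ∀ q, h < q → q ≤ m → ¬ RowLE (s q) (s a)) :
    StandardTab lam (actTab s (cycleIcc h m)) ∧
      IsDPerm n tl (actTab s (cycleIcc h m)) (ds * cycleIcc h m) ∧
      permLength n (ds * cycleIcc h m) = permLength n ds + permLength n (cycleIcc h m) :=
  ⟨hs.actTab_cycleIcc (by omega) (by omega) fun q hq hq' =>
      hs.not_precedesInLine_of_rowLE hl ha hb hbelow hah hq (by omega)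
        (fun hha => by omega) hhigh (hlow q hq hq'),
    hds.actTab (fixesOutside_cycleIcc.mono (by omega) (by omega)),
    hds.permLength_mul_cycleIcc htl (by omega) (by omega) fun q hq hq' =>
      nodeLex_of_rowLE hhigh (hlow q hq hq')⟩

end Move

theorem statement3_general {ℓ n : ℕ} (lam mu : Multicomp ℓ n)
    (hl : lam.IsMultipartition)
    (s tl tm : ℕ → Node) (hs : StandardTab lam s)
    (htl : IsRowReading lam tl) (htm : IsRowReading mu tm)
    (ds : Equiv.Perm ℕ) (hds : IsDPerm n tl s ds)
    (a b : ℕ) (ha : 1 ≤ a) (hab : a < b) (hb : b ≤ n)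
    (hrow : (tm a).1 = (tm b).1 ∧ (tm a).2.1 = (tm b).2.1)
    (hcol : (s a).1 = (s b).1 ∧ (s a).2.2 = (s b).2.2) :
    ∃ (w : Equiv.Perm ℕ) (c : ℕ), FixesOutside w a b ∧ a ≤ c ∧ c < b ∧
      StandardTab lam (actTab s w) ∧
      permLength n (ds * w) = permLength n ds + permLength n w ∧
      ((tm c).1 = (tm (c + 1)).1 ∧ (tm c).2.1 = (tm (c + 1)).2.1) ∧
      ((actTab s w c).1 = (actTab s w (c + 1)).1 ∧
        (actTab s w c).2.2 = (actTab s w (c + 1)).2.2) := by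
  induction b using Nat.strong_induction_on generalizing s ds with
  | _ b IH =>
  obtain ⟨x, hax, hxb, hx⟩ := hs.exists_eq_below hl ha hab hb hcol
  obtain hxb | rfl := hxb.lt_or_eq
  · obtain ⟨w, c, hw, hac, hcx, hsw, hlen, hrowc, hcolc⟩ := IH x hxb s hs ds hds hax (by omega)
      (htm.sameRow_of_le ha hb hrow hax.le hxb.le) ⟨by rw [hx], by rw [hx]⟩
    exact ⟨w, c, hw.mono le_rfl hxb.le, hac, by omega, hsw, hlen, hrowc, hcolc⟩
  obtain ⟨y, rfl⟩ : ∃ y, x = y + 1 := ⟨x - 1, by omega⟩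
  obtain ⟨h, hah, hhy, hhigh, hlow⟩ :=
    exists_greatest_of_lt (P := fun q => RowLE (s q) (s a)) hab (rowLE_refl _)
  have hlow' : ∀ q, h < q → q ≤ y + 1 → ¬ RowLE (s q) (s a) := fun q hq hqy => by
    obtain hqy | rfl := hqy.lt_or_eq
    exacts [hlow q hq hqy, by simp [hx, RowLE]]
  obtain rfl | hah := hah.eq_or_lt
  · obtain ⟨hsw, -, hlen⟩ := cycleIcc_move hl htl hs hds (m := y) ha hb hx le_rfl (by omega)
      (fun _ => by omega) hhigh fun q hq _ => hlow' q hq (by omega)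
    have hrow' := htm.sameRow_of_le ha hb hrow (k := y) (by omega) (by omega)
    refine ⟨cycleIcc a y, y, fixesOutside_cycleIcc.mono le_rfl (by omega), by omega, by omega,
      hsw, hlen, by omega, ?_⟩
    simp only [actTab, cycleIcc_apply_right (by omega : a ≤ y),
      fixesOutside_cycleIcc (y + 1) (Or.inr y.lt_succ_self)]
    exact hcol
  · obtain ⟨hsw, hdsw, hlen⟩ := cycleIcc_move hl htl hs hds ha hb hx hah.le le_rfl
      (fun _ => by omega) hhigh hlow'
    obtain ⟨w, c, hw, hac, hcy, hsw', hlen', hrowc, hcolc⟩ := IH y (by omega) _ hsw _ hdsw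
      (by omega) (by omega) (htm.sameRow_of_le ha hb hrow (by omega) (by omega)) (by
        simp only [actTab, fixesOutside_cycleIcc a (Or.inl hah),
          cycleIcc_apply_of_mem (by omega : h ≤ y) (by omega : y < y + 1)]
        exact hcol)
    have hcyc := fixesOutside_cycleIcc (h := h) (m := y + 1)
    refine ⟨cycleIcc h (y + 1) * w, c, (hcyc.mono hah.le le_rfl).mul (hw.mono le_rfl (by omega)),
      hac, by omega, hsw', ?_, hrowc, hcolc⟩
    exact permLength_mul_mul_eq (hcyc.mono (by omega) hb) (hw.mono ha (by omega)) hlen hlen'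

/-- Lemma 2.2.  If `a < b` are in the same row of `t^μ` and the same
column of the standard `λ`-tableau `s`, then there are `w ∈ S_{{a,…,b}}` and `a ≤ c < b`
with `sw` standard, `ℓ(d(s)w) = ℓ(d(s)) + ℓ(w)`, and `c, c+1` in the same row of `t^μ`
and the same column of `sw`. -/
theorem statement3 {ℓ n : ℕ} (lam mu : Multicomp ℓ n)
    (hl : lam.IsMultipartition) (hm : mu.IsMultipartition)
    (s tl tm : ℕ → Node) (hs : StandardTab lam s)
    (htl : IsRowReading lam tl) (htm : IsRowReading mu tm)
    (ds : Equiv.Perm ℕ) (hds : IsDPerm n tl s ds)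
    (a b : ℕ) (ha : 1 ≤ a) (hab : a < b) (hb : b ≤ n)
    (hrow : (tm a).1 = (tm b).1 ∧ (tm a).2.1 = (tm b).2.1)
    (hcol : (s a).1 = (s b).1 ∧ (s a).2.2 = (s b).2.2) :
    ∃ (w : Equiv.Perm ℕ) (c : ℕ), FixesOutside w a b ∧ a ≤ c ∧ c < b ∧
      StandardTab lam (actTab s w) ∧
      permLength n (ds * w) = permLength n ds + permLength n w ∧
      ((tm c).1 = (tm (c + 1)).1 ∧ (tm c).2.1 = (tm (c + 1)).2.1) ∧
      ((actTab s w c).1 = (actTab s w (c + 1)).1 ∧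
        (actTab s w c).2.2 = (actTab s w (c + 1)).2.2) :=
  statement3_general lam mu hl s tl tm hs htl htm ds hds a b ha hab hb hrow hcol

end SpechtInduction
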